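/- arXiv:1107.1290 — 3 statements merged into one kernel-verified Lean document; each statement's English description precedes it below -/
import Mathlib

section
/- Let H₀ : D → 𝓗 be a symmetric linear operator that is bounded below (there is c ∈ ℝ with ⟨H₀ψ,ψ⟩ ≥ c‖ψ‖² for all ψ ∈ D), and let H₁ : D → 𝓗 be a symmetric linear operator such that for some constants 0 ≤ a < 1 and b ≥ 0 one has |⟨H₁ψ,ψ⟩| ≤ a·⟨H₀ψ,ψ⟩ + b·‖ψ‖² for all ψ ∈ D. Then for every n ≥ 1 the min–max values satisfy μₙ(H₀ + H₁) ≥ (1 − a)·μₙ(H₀) − b. -/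
/-!
On unit vectors the relative bound gives
`(1 - a)⟨H₀ψ,ψ⟩ - b ≤ ⟨(H₀ + H₁)ψ,ψ⟩ ≤ (1 + a)⟨H₀ψ,ψ⟩ + b`.
Both maps `x ↦ (1 ∓ a)x ± b` are monotone, so the lower estimate passes through the infimum
defining `U` and then through the supremum defining `μₙ`. Since `sSup` of a set of reals that is
not bounded above is `0`, the upper estimate is needed as well: it shows that if the `U`-values
of `H₀` are bounded above then so are those of `H₀ + H₁`.
-/

/-- `U_H(φ₁,…,φ_m) = inf{⟨Hψ,ψ⟩ : ψ ∈ D, ‖ψ‖ = 1, ψ ⊥ φⱼ for all j}`. -/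
noncomputable def minMaxU {E : Type*} [NormedAddCommGroup E] [InnerProductSpace ℂ E]
    {D : Submodule ℂ E} (H : D →ₗ[ℂ] E) {m : ℕ} (φ : Fin m → E) : ℝ :=
  sInf {r : ℝ | ∃ ψ : D, ‖(ψ : E)‖ = 1 ∧ (∀ j, (inner ℂ (ψ : E) (φ j) : ℂ) = 0) ∧
    r = (inner ℂ (H ψ) (ψ : E) : ℂ).re}

/-- The min–max values `μₙ(H) = sup_{φ₁,…,φ_{n−1}} U_H(φ₁,…,φ_{n−1})`. -/
noncomputable def minMaxMu {E : Type*} [NormedAddCommGroup E] [InnerProductSpace ℂ E]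
    {D : Submodule ℂ E} (H : D →ₗ[ℂ] E) (n : ℕ) : ℝ :=
  sSup {s : ℝ | ∃ φ : Fin (n - 1) → E, s = minMaxU H φ}

open Set

section RealBounds

variable {ι : Type*} {f g : ι → ℝ} {p b : ℝ}

theorem mul_iInf_sub_le_iInf (hp : 0 ≤ p) (hb : 0 ≤ b) (hf : BddBelow (range f))
    (h : ∀ i, p * f i - b ≤ g i) : p * (⨅ i, f i) - b ≤ ⨅ i, g i := by
  rcases isEmpty_or_nonempty ι with hι | hι
  · simp only [Real.iInf_of_isEmpty, mul_zero]
    linarith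
  · exact le_ciInf fun i => (h i).trans' (by gcongr; exact ciInf_le hf i)

theorem iInf_le_mul_iInf_add (hp : 0 ≤ p) (hb : 0 ≤ b) (hg : BddBelow (range g))
    (h : ∀ i, g i ≤ p * f i + b) : ⨅ i, g i ≤ p * (⨅ i, f i) + b := by
  rcases isEmpty_or_nonempty ι with hι | hι
  · simp [hb]
  · rw [Real.mul_iInf_of_nonneg hp, ← sub_le_iff_le_add]
    exact le_ciInf fun i => by linarith [ciInf_le hg i, h i]

theorem bddAbove_range_of_le_mul_add (hp : 0 ≤ p) (h : ∀ i, g i ≤ p * f i + b)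
    (hf : BddAbove (range f)) : BddAbove (range g) := by
  obtain ⟨M, hM⟩ := hf
  refine ⟨p * M + b, forall_mem_range.2 fun i => (h i).trans ?_⟩
  gcongr
  exact hM (mem_range_self i)

theorem mul_iSup_sub_le_iSup (hp : 0 ≤ p) (hb : 0 ≤ b) (h : ∀ i, p * f i - b ≤ g i)
    (hfg : BddAbove (range f) → BddAbove (range g)) : p * (⨆ i, f i) - b ≤ ⨆ i, g i := by
  rcases isEmpty_or_nonempty ι with hι | hι
  · simp only [Real.iSup_of_isEmpty, mul_zero]
    linarith
  by_cases hg : BddAbove (range g)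
  · rw [Real.mul_iSup_of_nonneg hp, sub_le_iff_le_add]
    exact ciSup_le fun i => by linarith [le_ciSup hg i, h i]
  · rw [Real.iSup_of_not_bddAbove hg, Real.iSup_of_not_bddAbove (mt hfg hg)]
    linarith

end RealBounds

section MinMax

variable {E : Type*} [NormedAddCommGroup E] [InnerProductSpace ℂ E] {D : Submodule ℂ E}

noncomputable def quadForm (H : D →ₗ[ℂ] E) (ψ : D) : ℝ :=
  (inner ℂ (H ψ) (ψ : E)).re

def unitOrthogonal (D : Submodule ℂ E) {m : ℕ} (φ : Fin m → E) : Set D :=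
  {ψ | ‖(ψ : E)‖ = 1 ∧ ∀ j, inner ℂ (ψ : E) (φ j) = 0}

theorem abs_quadForm_add_sub_le {H K : D →ₗ[ℂ] E} {ψ : D} {r : ℝ}
    (hK : ‖inner ℂ (K ψ) (ψ : E)‖ ≤ r) : |quadForm (H + K) ψ - quadForm H ψ| ≤ r := by
  have hsub : quadForm (H + K) ψ - quadForm H ψ = quadForm K ψ := by
    simp [quadForm]
  exact hsub ▸ (Complex.abs_re_le_norm _).trans hK

theorem minMaxU_eq_iInf (H : D →ₗ[ℂ] E) {m : ℕ} (φ : Fin m → E) :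
    minMaxU H φ = ⨅ ψ : unitOrthogonal D φ, quadForm H ψ := by
  refine congrArg sInf (ext fun r => ?_)
  simp [unitOrthogonal, quadForm, eq_comm, and_assoc]

theorem minMaxMu_eq_iSup (H : D →ₗ[ℂ] E) (n : ℕ) :
    minMaxMu H n = ⨆ φ : Fin (n - 1) → E, minMaxU H φ := by
  refine congrArg sSup (ext fun s => ?_)
  simp [eq_comm]

theorem bddBelow_range_quadForm {H : D →ₗ[ℂ] E} {c : ℝ}
    (hc : ∀ ψ : D, c * ‖(ψ : E)‖ ^ 2 ≤ quadForm H ψ) {m : ℕ} (φ : Fin m → E) :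
    BddBelow (range fun ψ : unitOrthogonal D φ => quadForm H ψ) :=
  ⟨c, forall_mem_range.2 fun ψ => by simpa [ψ.2.1] using hc ψ⟩

end MinMax

theorem minMax_of_relatively_bounded_perturbation_general
    {E : Type*} [NormedAddCommGroup E] [InnerProductSpace ℂ E]
    (D : Submodule ℂ E)
    (H0 H1 : D →ₗ[ℂ] E)
    (hbdd : ∃ c : ℝ, ∀ ψ : D, c * ‖(ψ : E)‖ ^ 2 ≤ (inner ℂ (H0 ψ) (ψ : E) : ℂ).re)
    (a b : ℝ) (ha0 : 0 ≤ a) (ha1 : a < 1) (hb : 0 ≤ b)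
    (hrel : ∀ ψ : D, ‖(inner ℂ (H1 ψ) (ψ : E) : ℂ)‖ ≤
      a * (inner ℂ (H0 ψ) (ψ : E) : ℂ).re + b * ‖(ψ : E)‖ ^ 2) :
    ∀ n : ℕ, 1 ≤ n → (1 - a) * minMaxMu H0 n - b ≤ minMaxMu (H0 + H1) n := by
  intro n _
  obtain ⟨c, hc⟩ := hbdd
  change ∀ ψ : D, _ ≤ quadForm H0 ψ at hc
  change ∀ ψ : D, _ ≤ a * quadForm H0 ψ + _ at hrel
  have hpert ψ := abs_le.mp (abs_quadForm_add_sub_le (H := H0) (hrel ψ))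
  have lower (ψ : D) (hψ : ‖(ψ : E)‖ = 1) :
      (1 - a) * quadForm H0 ψ - b ≤ quadForm (H0 + H1) ψ := by
    linarith [hψ ▸ hpert ψ]
  have upper (ψ : D) (hψ : ‖(ψ : E)‖ = 1) :
      quadForm (H0 + H1) ψ ≤ (1 + a) * quadForm H0 ψ + b := by
    linarith [hψ ▸ hpert ψ]
  have hc_add (ψ : D) : ((1 - a) * c - b) * ‖(ψ : E)‖ ^ 2 ≤ quadForm (H0 + H1) ψ := by
    nlinarith [hc ψ, hpert ψ]
  simp only [minMaxMu_eq_iSup, minMaxU_eq_iInf]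
  exact mul_iSup_sub_le_iSup (by linarith) hb
    (fun φ => mul_iInf_sub_le_iInf (by linarith) hb (bddBelow_range_quadForm hc φ)
      fun ψ => lower ψ ψ.2.1)
    (bddAbove_range_of_le_mul_add (by linarith) fun φ =>
      iInf_le_mul_iInf_add (by linarith) hb (bddBelow_range_quadForm hc_add φ)
      fun ψ => upper ψ ψ.2.1)

/-- **Min–max estimate for a relatively form-bounded perturbation.**
If `H₀` is symmetric and bounded below and `H₁` is symmetric with
`|⟨H₁ψ,ψ⟩| ≤ a⟨H₀ψ,ψ⟩ + b‖ψ‖²` for some `0 ≤ a < 1`, `b ≥ 0`, then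
`μₙ(H₀ + H₁) ≥ (1 − a)·μₙ(H₀) − b` for every `n ≥ 1`. -/
theorem minMax_of_relatively_bounded_perturbation
    {E : Type*} [NormedAddCommGroup E] [InnerProductSpace ℂ E] [CompleteSpace E]
    (D : Submodule ℂ E) (hD : Dense (D : Set E))
    (H0 H1 : D →ₗ[ℂ] E)
    (hsym0 : ∀ ψ φ : D, (inner ℂ (H0 ψ) (φ : E) : ℂ) = inner ℂ (ψ : E) (H0 φ))
    (hsym1 : ∀ ψ φ : D, (inner ℂ (H1 ψ) (φ : E) : ℂ) = inner ℂ (ψ : E) (H1 φ))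
    (hbdd : ∃ c : ℝ, ∀ ψ : D, c * ‖(ψ : E)‖ ^ 2 ≤ (inner ℂ (H0 ψ) (ψ : E) : ℂ).re)
    (a b : ℝ) (ha0 : 0 ≤ a) (ha1 : a < 1) (hb : 0 ≤ b)
    (hrel : ∀ ψ : D, ‖(inner ℂ (H1 ψ) (ψ : E) : ℂ)‖ ≤
      a * (inner ℂ (H0 ψ) (ψ : E) : ℂ).re + b * ‖(ψ : E)‖ ^ 2) :
    ∀ n : ℕ, 1 ≤ n → (1 - a) * minMaxMu H0 n - b ≤ minMaxMu (H0 + H1) n :=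
  minMax_of_relatively_bounded_perturbation_general D H0 H1 hbdd a b ha0 ha1 hb hrel
end

section
/- Let W ∈ ℂ[z₁,…,z_N] be a nondegenerate quasi-homogeneous polynomial of type (q₁,…,q_N) with all weights qᵢ ≤ 1/2, and set δ̂₀ = (minᵢ qᵢ)/(min_j(1 − q_j)). Let W_l = c·Πᵢ zᵢ^{bᵢ} (c ∈ ℂ, bᵢ ∈ ℕ) be any monomial of quasi-homogeneous weight exactly 1, i.e. Σᵢ qᵢbᵢ = 1. Then there is a constant C > 0 such that for all z ∈ ℂ^N: Σ_{p,q} |∂²W_l/∂z_p∂z_q(z)| ≤ C·(Σᵢ |∂W/∂zᵢ(z)| + 1)^{2 − 2δ̂₀}. -/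
/-! Write `z = t • w` for the weighted action `(t • w)ᵢ = t ^ kᵢ wᵢ`, with `t ≥ 0` and `‖w‖ = 1`.
A weighted homogeneous polynomial of degree `e` is then `O(t ^ e)`, while nondegeneracy of `W`
and compactness of the unit sphere give `∑ᵢ |∂ᵢW(z)| ≥ c t ^ (d - max k)` for `t ≥ 1`. The second
derivatives of a monomial of degree `d` have degree at most `d - 2 min k`, and
`d - 2 min k ≤ (d - max k) (2 - 2 δ̂₀)` since `2 max k ≤ d`. -/

theorem div_le_two_sub_two_mul_div {e a m : ℕ} (hm : 0 < m) (h : e + 2 * a ≤ 2 * m) :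
    (e : ℝ) / m ≤ 2 - 2 * ((a : ℝ) / m) := by
  have hm' : (0 : ℝ) < m := by exact_mod_cast hm
  rw [div_le_iff₀ hm', sub_mul, mul_assoc, div_mul_cancel₀ _ hm'.ne']
  have : (e : ℝ) + 2 * a ≤ 2 * m := by exact_mod_cast h
  linarith

namespace MvPolynomial

variable {σ R : Type*} [CommSemiring R]

theorem prod_pow_mul_eq_pow_weight (k : σ → ℕ) (t : R) (u : σ →₀ ℕ) :
    (u.prod fun i e => t ^ (k i * e)) = t ^ Finsupp.weight k u := by
  simp only [Finsupp.weight_apply, Finsupp.prod, Finsupp.sum, smul_eq_mul, mul_comm,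
    Finset.prod_pow_eq_pow_sum]

theorem aeval_C_pow_mul_X_monomial (k : σ → ℕ) (t : R) (u : σ →₀ ℕ) (r : R) :
    aeval (fun i => C (t ^ k i) * X i) (monomial u r) =
      monomial u (t ^ Finsupp.weight k u * r) := by
  rw [aeval_monomial, monomial_eq, ← prod_pow_mul_eq_pow_weight, map_mul, map_finsuppProd]
  simp only [mul_pow, Finsupp.prod_mul, ← C_pow, ← pow_mul, algebraMap_eq]
  ring

theorem IsWeightedHomogeneous.eval_pow_mul {k : σ → ℕ} {φ : MvPolynomial σ R} {n : ℕ}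
    (hφ : IsWeightedHomogeneous k φ n) (t : R) (z : σ → R) :
    eval (fun i => t ^ k i * z i) φ = t ^ n * eval z φ := by
  induction hφ using IsWeightedHomogeneous.induction_on with
  | zero => simp
  | add p q _ _ hp hq => rw [map_add, map_add, hp, hq, mul_add]
  | monomial u r hu =>
    rw [eval_monomial, eval_monomial, ← hu, ← prod_pow_mul_eq_pow_weight]
    simp only [mul_pow, Finsupp.prod_mul, ← pow_mul]
    ring

theorem coeff_aeval_C_pow_mul_X (k : σ → ℕ) (t : R) (φ : MvPolynomial σ R) (a : σ →₀ ℕ) :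
    coeff a (aeval (fun i => C (t ^ k i) * X i) φ) = t ^ Finsupp.weight k a * coeff a φ := by
  classical
  induction φ using MvPolynomial.induction_on' with
  | monomial u r =>
    rw [aeval_C_pow_mul_X_monomial, coeff_monomial, coeff_monomial]
    split_ifs with h
    · rw [h]
    · rw [mul_zero]
  | add p q hp hq => rw [map_add, coeff_add, coeff_add, hp, hq, mul_add]

theorem eval_aeval_C_pow_mul_X (k : σ → ℕ) (t : R) (φ : MvPolynomial σ R) (z : σ → R) :
    eval z (aeval (fun i => C (t ^ k i) * X i) φ) = eval (fun i => t ^ k i * z i) φ := by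
  rw [← coe_aeval_eq_eval, ← coe_aeval_eq_eval]
  change ((aeval z).comp (aeval _)) φ = _
  rw [comp_aeval]
  simp

theorem isWeightedHomogeneous_of_eval_pow_mul {K : Type*} [Field K] [CharZero K]
    {k : σ → ℕ} {φ : MvPolynomial σ K} {n : ℕ}
    (h : ∀ (t : K) (z : σ → K), eval (fun i => t ^ k i * z i) φ = t ^ n * eval z φ) :
    IsWeightedHomogeneous k φ n := by
  intro a ha
  have hscale : aeval (fun i => C ((2 : K) ^ k i) * X i) φ = C (2 ^ n) * φ :=
    MvPolynomial.funext fun z => by rw [eval_aeval_C_pow_mul_X, h, map_mul, eval_C]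
  have hcoeff := congrArg (coeff a) hscale
  rw [coeff_aeval_C_pow_mul_X, coeff_C_mul] at hcoeff
  exact Nat.pow_right_injective le_rfl (by exact_mod_cast mul_right_cancel₀ ha hcoeff)

section Analytic

variable {𝕜 : Type*} [RCLike 𝕜] [Fintype σ] [Nonempty σ]

theorem exists_eq_pow_mul_of_norm_eq_one {k : σ → ℕ} (hk : ∀ i, 0 < k i) (z : σ → 𝕜) :
    ∃ t : ℝ, 0 ≤ t ∧ ∃ w : σ → 𝕜, ‖w‖ = 1 ∧ z = fun i => (t : 𝕜) ^ k i * w i := by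
  set f : σ → ℝ := fun i => ‖z i‖ ^ ((k i : ℝ)⁻¹)
  have hf : ∀ i, f i ^ k i = ‖z i‖ := fun i =>
    Real.rpow_inv_natCast_pow (norm_nonneg _) (hk i).ne'
  obtain ⟨i₁, -, hi₁⟩ := Finset.exists_mem_eq_sup' Finset.univ_nonempty f
  set t := Finset.univ.sup' Finset.univ_nonempty f
  have hzt : ∀ i, ‖z i‖ ≤ t ^ k i := fun i =>
    hf i ▸ pow_le_pow_left₀ (by positivity) (Finset.le_sup' f (Finset.mem_univ i)) _
  have ht : 0 ≤ t := hi₁ ▸ by positivity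
  rcases ht.eq_or_lt with ht0 | ht0
  · refine ⟨0, le_rfl, fun _ => 1, by simp [pi_norm_const], ?_⟩
    funext i
    have := hzt i
    rw [← ht0, zero_pow (hk i).ne'] at this
    simpa [zero_pow (hk i).ne'] using this
  refine ⟨t, ht, fun i => z i / (t : 𝕜) ^ k i, le_antisymm ?_ ?_, ?_⟩
  · refine (pi_norm_le_iff_of_nonneg zero_le_one).mpr fun i => ?_
    rw [norm_div, norm_pow, RCLike.norm_ofReal, abs_of_pos ht0]
    exact div_le_one_of_le₀ (hzt i) (by positivity)
  · refine le_trans (le_of_eq ?_) (norm_le_pi_norm _ i₁)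
    rw [norm_div, norm_pow, RCLike.norm_ofReal, abs_of_pos ht0, ← hf i₁, ← hi₁]
    exact (div_self (by positivity)).symm
  · funext i
    have : (t : 𝕜) ^ k i ≠ 0 := pow_ne_zero _ (by exact_mod_cast ht0.ne')
    field_simp

theorem exists_pos_le_sum_norm_eval_pderiv {W : MvPolynomial σ 𝕜}
    (hnd : ∀ z : σ → 𝕜, (∀ i, eval z (pderiv i W) = 0) → z = 0) :
    ∃ c > 0, ∀ w : σ → 𝕜, ‖w‖ = 1 → c ≤ ∑ i, ‖eval w (pderiv i W)‖ := by
  have hne : (Metric.sphere (0 : σ → 𝕜) 1).Nonempty := ⟨fun _ => 1, by simp [pi_norm_const]⟩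
  obtain ⟨w₀, hw₀, hmin⟩ := (isCompact_sphere (0 : σ → 𝕜) 1).exists_isMinOn hne
    (continuous_finsetSum _ fun i _ => (continuous_eval (pderiv i W)).norm).continuousOn
  refine ⟨_, lt_of_le_of_ne (by positivity) fun h => ?_, fun w hw => hmin (by simpa using hw)⟩
  have hzero : ∀ i, eval w₀ (pderiv i W) = 0 := fun i => norm_eq_zero.mp <|
    (Finset.sum_eq_zero_iff_of_nonneg fun i _ => norm_nonneg _).mp h.symm i (Finset.mem_univ i)
  simp [hnd w₀ hzero] at hw₀

theorem exists_pow_le_mul_sum_norm_eval_pderiv_add_one {k : σ → ℕ} {W : MvPolynomial σ 𝕜}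
    {d m : ℕ} (hW : IsWeightedHomogeneous k W d)
    (hnd : ∀ z : σ → 𝕜, (∀ i, eval z (pderiv i W) = 0) → z = 0) (hm : ∀ i, m + k i ≤ d) :
    ∃ A > 0, ∀ t : ℝ, 0 ≤ t → ∀ w : σ → 𝕜, ‖w‖ = 1 →
      t ^ m ≤ A * (∑ i, ‖eval (fun j => (t : 𝕜) ^ k j * w j) (pderiv i W)‖ + 1) := by
  obtain ⟨c, hc, hcw⟩ := exists_pos_le_sum_norm_eval_pderiv hnd
  refine ⟨max 1 c⁻¹, by positivity, fun t ht w hw => ?_⟩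
  set S := ∑ i, ‖eval (fun j => (t : 𝕜) ^ k j * w j) (pderiv i W)‖
  have hS : 0 ≤ S := by positivity
  rcases le_total t 1 with ht1 | ht1
  · calc t ^ m ≤ 1 := pow_le_one₀ ht ht1
      _ ≤ max 1 c⁻¹ * (S + 1) := by nlinarith [le_max_left 1 c⁻¹]
  have hgrad : c * t ^ m ≤ S := calc
    c * t ^ m ≤ t ^ m * ∑ i, ‖eval w (pderiv i W)‖ := by
      rw [mul_comm]; exact mul_le_mul_of_nonneg_left (hcw w hw) (by positivity)
    _ ≤ ∑ i, t ^ (d - k i) * ‖eval w (pderiv i W)‖ := by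
      rw [Finset.mul_sum]
      gcongr with i
      have := hm i
      omega
    _ = S := by
      refine Finset.sum_congr rfl fun i _ => ?_
      rw [(hW.pderiv (Nat.sub_add_cancel (le_of_add_le_right (hm i)))).eval_pow_mul, norm_mul,
        norm_pow, RCLike.norm_ofReal, abs_of_nonneg ht]
  calc t ^ m ≤ c⁻¹ * (S + 1) := by
        rw [le_inv_mul_iff₀ hc]; linarith
    _ ≤ max 1 c⁻¹ * (S + 1) := by gcongr; exact le_max_right _ _

theorem IsWeightedHomogeneous.exists_norm_eval_le_mul_rpow {k : σ → ℕ} {W φ : MvPolynomial σ 𝕜}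
    {d m e : ℕ} (hφ : IsWeightedHomogeneous k φ e) (hk : ∀ i, 0 < k i)
    (hW : IsWeightedHomogeneous k W d)
    (hnd : ∀ z : σ → 𝕜, (∀ i, eval z (pderiv i W) = 0) → z = 0) (hm : ∀ i, m + k i ≤ d)
    (hm0 : 0 < m) {s : ℝ} (hs : (e : ℝ) / m ≤ s) :
    ∃ C ≥ 0, ∀ z : σ → 𝕜,
      ‖eval z φ‖ ≤ C * (∑ i, ‖eval z (pderiv i W)‖ + 1) ^ s := by
  obtain ⟨A, hA, hAt⟩ := exists_pow_le_mul_sum_norm_eval_pderiv_add_one hW hnd hm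
  obtain ⟨M, hM⟩ := (isCompact_sphere (0 : σ → 𝕜) 1).exists_bound_of_continuousOn
    (continuous_eval φ).continuousOn
  refine ⟨max M 0 * A ^ ((e : ℝ) / m), by positivity, fun z => ?_⟩
  obtain ⟨t, ht, w, hw, rfl⟩ := exists_eq_pow_mul_of_norm_eq_one hk z
  set S := ∑ i, ‖eval (fun j => (t : 𝕜) ^ k j * w j) (pderiv i W)‖
  have hte : t ^ e = (t ^ m) ^ ((e : ℝ) / m) := by
    rw [← Real.rpow_natCast, ← Real.rpow_natCast, ← Real.rpow_mul ht]
    field_simp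
  calc ‖eval (fun i => (t : 𝕜) ^ k i * w i) φ‖ = ‖eval w φ‖ * t ^ e := by
        rw [hφ.eval_pow_mul, norm_mul, norm_pow, RCLike.norm_ofReal, abs_of_nonneg ht, mul_comm]
    _ ≤ max M 0 * (A * (S + 1)) ^ ((e : ℝ) / m) := by
        rw [hte]
        gcongr
        · exact le_max_of_le_left (hM w (by simpa using hw))
        · exact hAt t ht w hw
    _ ≤ max M 0 * A ^ ((e : ℝ) / m) * (S + 1) ^ s := by
        rw [Real.mul_rpow hA.le (by positivity), ← mul_assoc]
        gcongr
        linarith [show 0 ≤ S by positivity]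

theorem IsWeightedHomogeneous.exists_sum_norm_eval_pderiv_pderiv_le {k : σ → ℕ}
    {W φ : MvPolynomial σ 𝕜} {d K k₀ : ℕ} (hφ : IsWeightedHomogeneous k φ d)
    (hk : ∀ i, 0 < k i) (hW : IsWeightedHomogeneous k W d)
    (hnd : ∀ z : σ → 𝕜, (∀ i, eval z (pderiv i W) = 0) → z = 0)
    (hk₀ : ∀ i, k₀ ≤ k i) (hK : ∀ i, k i ≤ K) (h2K : 2 * K ≤ d) :
    ∃ C > 0, ∀ z : σ → 𝕜, ∑ p, ∑ r, ‖eval z (pderiv p (pderiv r φ))‖ ≤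
      C * (∑ i, ‖eval z (pderiv i W)‖ + 1) ^ (2 - 2 * ((k₀ : ℝ) / (d - K : ℕ))) := by
  have hφpr : ∀ p r, IsWeightedHomogeneous k (pderiv p (pderiv r φ)) (d - k r - k p) :=
    fun p r => (hφ.pderiv (Nat.sub_add_cancel (by have := hK r; omega))).pderiv
      (Nat.sub_add_cancel (by have := hK r; have := hK p; omega))
  obtain ⟨i⟩ := ‹Nonempty σ›
  choose C hC0 hC using fun p r => (hφpr p r).exists_norm_eval_le_mul_rpow hk hW hnd
    (m := d - K) (fun i => by have := hK i; omega) (by have := hk i; have := hK i; omega)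
    (div_le_two_sub_two_mul_div (a := k₀) (by have := hk i; have := hK i; omega)
      (by have := hk₀ p; have := hk₀ r; have := hK p; omega))
  refine ⟨∑ p, ∑ r, C p r + 1, add_pos_of_nonneg_of_pos
    (Finset.sum_nonneg fun p _ => Finset.sum_nonneg fun r _ => hC0 p r) one_pos, fun z => ?_⟩
  calc _ ≤ ∑ p, ∑ r, C p r *
        (∑ i, ‖eval z (pderiv i W)‖ + 1) ^ (2 - 2 * ((k₀ : ℝ) / (d - K : ℕ))) := by
        gcongr with p _ r _
        exact hC p r z
    _ ≤ _ := by
        simp_rw [← Finset.sum_mul]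
        gcongr
        linarith

end Analytic

end MvPolynomial

open MvPolynomial

theorem second_derivative_estimate_weight_one_monomial_general
    (N : ℕ) (W : MvPolynomial (Fin N) ℂ)
    (q : Fin N → ℚ) (k : Fin N → ℕ) (d : ℕ)
    (hk : ∀ i, 0 < k i) (hd : 0 < d)
    (hq : ∀ i, q i = (k i : ℚ) / (d : ℚ))
    (hhom : ∀ (lam : ℂ) (z : Fin N → ℂ),
      eval (fun i => lam ^ (k i) * z i) W = lam ^ d * eval z W)
    (hnd : ∀ z : Fin N → ℂ, (∀ i, eval z (pderiv i W) = 0) → z = 0)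
    (hhalf : ∀ i, q i ≤ 1 / 2)
    -- `qm = minᵢ qᵢ` and `m = min_j (1 − q_j)`, so `δ̂₀ = qm / m`
    (qm : ℚ) (hqm : ∀ i, qm ≤ q i) (hqm' : ∃ i, q i = qm)
    (m : ℚ) (hm : ∀ j, m ≤ 1 - q j) (hm' : ∃ j, 1 - q j = m)
    -- the monomial `W_l = c·Πᵢ zᵢ^{bᵢ}` of quasi-homogeneous weight `1`
    (c : ℂ) (b : Fin N →₀ ℕ) (hb : ∑ i, q i * (b i : ℚ) = 1) :
    ∃ C : ℝ, 0 < C ∧ ∀ z : Fin N → ℂ,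
      (∑ p, ∑ r, ‖eval z (pderiv p (pderiv r (monomial b c)))‖)
        ≤ C * (∑ i, ‖eval z (pderiv i W)‖ + 1) ^ (((2 - 2 * (qm / m) : ℚ) : ℝ)) := by
  obtain ⟨i₀, rfl⟩ := hqm'
  obtain ⟨j₀, rfl⟩ := hm'
  have : Nonempty (Fin N) := ⟨i₀⟩
  have hdQ : (0 : ℚ) < d := by exact_mod_cast hd
  have hqk : ∀ i j, q i ≤ q j → k i ≤ k j := fun i j h => by
    rwa [hq, hq, div_le_div_iff_of_pos_right hdQ, Nat.cast_le] at h
  have h2K : 2 * k j₀ ≤ d := by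
    have := hhalf j₀
    rw [hq, div_le_iff₀ hdQ] at this
    exact_mod_cast (by linarith : (2 * k j₀ : ℚ) ≤ d)
  have hWl : IsWeightedHomogeneous k (monomial b c) d := by
    refine isWeightedHomogeneous_monomial _ _ _ ?_
    simp only [hq, div_mul_eq_mul_div, ← Finset.sum_div, div_eq_one_iff_eq hdQ.ne'] at hb
    simp_rw [Finsupp.weight_eq_sum, smul_eq_mul, mul_comm (b _)]
    exact_mod_cast hb
  have hδ : q i₀ / (1 - q j₀) = k i₀ / (d - k j₀ : ℕ) := by
    rw [hq, hq, Nat.cast_sub (by omega)]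
    field_simp
  obtain ⟨C, hC, hbound⟩ := hWl.exists_sum_norm_eval_pderiv_pderiv_le hk
    (isWeightedHomogeneous_of_eval_pow_mul hhom) hnd (fun i => hqk _ _ (hqm i))
    (fun i => hqk _ _ (by linarith [hm i])) h2K
  refine ⟨C, hC, fun z => ?_⟩
  rw [hδ]
  push_cast
  exact hbound z

/-- **Second-derivative estimate for a weight-one monomial.**
Let `W` be a nondegenerate quasi-homogeneous polynomial of type `(q₁,…,q_N)` with all
weights `qᵢ ≤ 1/2`; put `δ̂₀ = (minᵢ qᵢ)/(min_j (1 − q_j))`.  If `W_l = c·Πᵢ zᵢ^{bᵢ}`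
is a monomial of quasi-homogeneous weight exactly `1`, then there is `C > 0` with
`Σ_{p,r}|∂²W_l/∂z_p∂z_r(z)| ≤ C·(Σᵢ|∂W/∂zᵢ(z)| + 1)^{2 − 2δ̂₀}` for all `z ∈ ℂ^N`. -/
theorem second_derivative_estimate_weight_one_monomial
    (N : ℕ) (hN : 1 ≤ N) (W : MvPolynomial (Fin N) ℂ)
    (q : Fin N → ℚ) (k : Fin N → ℕ) (d : ℕ)
    (hk : ∀ i, 0 < k i) (hd : 0 < d)
    (hq : ∀ i, q i = (k i : ℚ) / (d : ℚ))
    (hq0 : ∀ i, 0 < q i) (hq1 : ∀ i, q i < 1)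
    (hhom : ∀ (lam : ℂ) (z : Fin N → ℂ),
      eval (fun i => lam ^ (k i) * z i) W = lam ^ d * eval z W)
    (hnd : ∀ z : Fin N → ℂ, (∀ i, eval z (pderiv i W) = 0) → z = 0)
    (hhalf : ∀ i, q i ≤ 1 / 2)
    -- `qm = minᵢ qᵢ` and `m = min_j (1 − q_j)`, so `δ̂₀ = qm / m`
    (qm : ℚ) (hqm : ∀ i, qm ≤ q i) (hqm' : ∃ i, q i = qm)
    (m : ℚ) (hm : ∀ j, m ≤ 1 - q j) (hm' : ∃ j, 1 - q j = m)
    -- the monomial `W_l = c·Πᵢ zᵢ^{bᵢ}` of quasi-homogeneous weight `1`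
    (c : ℂ) (b : Fin N →₀ ℕ) (hb : ∑ i, q i * (b i : ℚ) = 1) :
    ∃ C : ℝ, 0 < C ∧ ∀ z : Fin N → ℂ,
      (∑ p, ∑ r, ‖eval z (pderiv p (pderiv r (monomial b c)))‖)
        ≤ C * (∑ i, ‖eval z (pderiv i W)‖ + 1) ^ (((2 - 2 * (qm / m) : ℚ) : ℝ)) :=
  second_derivative_estimate_weight_one_monomial_general N W q k d hk hd hq hhom hnd hhalf qm hqm
    hqm' m hm hm' c b hb
end

section
/- Let W ∈ ℂ[z₁,…,z_N] be a nondegenerate quasi-homogeneous polynomial of type (q₁,…,q_N) with all weights qᵢ ≤ 1/2. Then the section-bundle system (ℂ^N, W) with the standard flat metric is strongly regular tame: for every integer s ≥ 1 and every constant C > 0, (Σᵢ|∂W/∂zᵢ(z)|²)^s − C·Σ_{|I|=2s}|∂^I W(z)| → ∞ as ‖z‖ → ∞ in ℂ^N, where the sum runs over all multi-indices I = (i₁,…,i_{2s}) of order 2s and ∂^I W = ∂^{2s}W/∂z_{i₁}⋯∂z_{i_{2s}}. -/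
/-!
Write a point with `‖z‖ ≥ 1` as `z = t ^ k • u` with `t ≥ 1` and `‖u‖ = 1` (weighted polar
coordinates, found by the intermediate value theorem). Quasi-homogeneity turns every
derivative of `W` at `z` into a power of `t` times the same derivative at `u`. Because
`1 ≤ kᵢ ≤ d / 2`, the gradient term grows at least like `t ^ d` while every derivative of
order `2s ≥ 2` grows at most like `t ^ (d - 2s)`; on the unit sphere the gradient is bounded
below by nondegeneracy and compactness, and the derivatives are bounded above. Finally
`‖z‖ ≤ t ^ d`, so `t → ∞` as `‖z‖ → ∞`.
-/

open MvPolynomial Filter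

namespace MvPolynomial

variable {σ R : Type*} [CommSemiring R]

theorem eval_aeval_C_mul_X (c z : σ → R) (P : MvPolynomial σ R) :
    eval z (aeval (fun j => C (c j) * X j) P) = eval (fun j => c j * z j) P := by
  induction P using MvPolynomial.induction_on with
  | C a => simp
  | add p q hp hq => simp only [map_add, hp, hq]
  | mul_X p j ih => simp only [map_mul, aeval_X, eval_C, eval_X, ih]

theorem pderiv_aeval_C_mul_X (c : σ → R) (i : σ) (P : MvPolynomial σ R) :
    pderiv i (aeval (fun j => C (c j) * X j) P)
      = C (c i) * aeval (fun j => C (c j) * X j) (pderiv i P) := by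
  induction P using MvPolynomial.induction_on with
  | C a => simp
  | add p q hp hq => simp only [map_add, hp, hq, mul_add]
  | mul_X p j ih =>
    simp only [map_mul, aeval_X, pderiv_mul, ih, pderiv_C, map_add]
    obtain rfl | h := eq_or_ne j i
    · simp only [pderiv_X_self, map_one]; ring
    · simp only [pderiv_X_of_ne h, map_zero]; ring

noncomputable def iteratedPderiv (L : List σ) (P : MvPolynomial σ R) : MvPolynomial σ R :=
  L.foldl (fun p i => pderiv i p) P

/-- Functional counterpart of `IsWeightedHomogeneous`. The degree is an integer because
differentiation may push it below zero. -/
def IsQuasiHomogeneous {K : Type*} [Field K] (k : σ → ℕ) (e : ℤ) (P : MvPolynomial σ K) :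
    Prop :=
  ∀ t : K, t ≠ 0 → ∀ z : σ → K, eval (fun j => t ^ k j * z j) P = t ^ e * eval z P

namespace IsQuasiHomogeneous

variable {k : σ → ℕ} {e : ℤ}

section Field

variable {K : Type*} [Field K] [Infinite K] {P : MvPolynomial σ K}

theorem pderiv (h : IsQuasiHomogeneous k e P) (i : σ) :
    IsQuasiHomogeneous k (e - k i) (pderiv i P) := by
  intro t ht z
  have hscale : aeval (fun j => C (t ^ k j) * X j) P = C (t ^ e) * P :=
    MvPolynomial.funext fun w => by rw [eval_aeval_C_mul_X, eval_mul, eval_C, h t ht w]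
  have hchain := congrArg (eval z) (pderiv_aeval_C_mul_X (fun j => t ^ k j) i P)
  rw [hscale, pderiv_C_mul, eval_mul, eval_C, eval_mul, eval_C, eval_aeval_C_mul_X] at hchain
  rw [zpow_sub₀ ht, zpow_natCast, div_mul_eq_mul_div, hchain,
    mul_div_cancel_left₀ _ (pow_ne_zero _ ht)]

theorem iteratedPderiv (h : IsQuasiHomogeneous k e P) (L : List σ) :
    IsQuasiHomogeneous k (e - (L.map fun j => (k j : ℤ)).sum) (iteratedPderiv L P) := by
  induction L generalizing e P with
  | nil => simpa [MvPolynomial.iteratedPderiv] using h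
  | cons i L ih => simpa [MvPolynomial.iteratedPderiv, sub_sub] using ih (h.pderiv i)

end Field

theorem norm_eval_scale {𝕜 : Type*} [RCLike 𝕜] {P : MvPolynomial σ 𝕜}
    (h : IsQuasiHomogeneous k e P) {t : ℝ} (ht : 0 < t) (z : σ → 𝕜) :
    ‖eval (fun j => (t : 𝕜) ^ k j * z j) P‖ = t ^ e * ‖eval z P‖ := by
  rw [h t (by exact_mod_cast ht.ne') z, norm_mul, norm_zpow, RCLike.norm_ofReal, abs_of_pos ht]

end IsQuasiHomogeneous

end MvPolynomial

namespace EuclideanSpace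

variable {𝕜 ι : Type*} [RCLike 𝕜] [Fintype ι] {k : ι → ℕ}

theorem exists_weighted_polar (hk : ∀ j, 0 < k j) {v : EuclideanSpace 𝕜 ι} (hv : 1 ≤ ‖v‖) :
    ∃ t : ℝ, 1 ≤ t ∧ ∃ u : EuclideanSpace 𝕜 ι, ‖u‖ = 1 ∧ ∀ j, v j = (t : 𝕜) ^ k j * u j := by
  -- `ψ r = ‖r ^ k • v‖ ^ 2`; take `t = r⁻¹` for a root of `ψ r = 1` in `(0, 1]`.
  set ψ : ℝ → ℝ := fun r => ∑ j, ‖v j‖ ^ 2 * r ^ (2 * k j)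
  have hψ0 : ψ 0 = 0 := by simp [ψ, fun j => (hk j).ne']
  have hψ1 : 1 ≤ ψ 1 := by simpa [ψ, ← EuclideanSpace.norm_sq_eq] using one_le_pow₀ (n := 2) hv
  obtain ⟨r, ⟨hr0, hr1⟩, hψr⟩ : ∃ r ∈ Set.Icc (0 : ℝ) 1, ψ r = 1 :=
    intermediate_value_Icc zero_le_one (by fun_prop) ⟨hψ0.trans_le zero_le_one, hψ1⟩
  have hr : r ≠ 0 := by rintro rfl; simp [hψ0] at hψr
  refine ⟨r⁻¹, one_le_inv₀ (hr0.lt_of_ne' hr) |>.2 hr1,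
    WithLp.toLp 2 fun j => (r : 𝕜) ^ k j * v j, ?_, fun j => ?_⟩
  · rw [← pow_eq_one_iff_of_nonneg (norm_nonneg _) two_ne_zero, EuclideanSpace.norm_sq_eq, ← hψr]
    refine Finset.sum_congr rfl fun j _ => ?_
    simp only [norm_mul, norm_pow, norm_algebraMap', Real.norm_eq_abs, abs_of_nonneg hr0, mul_pow,
      pow_mul]
    ring
  · simp [hr]

theorem norm_le_pow_of_weighted {n : ℕ} (hkn : ∀ j, k j ≤ n) {t : ℝ} (ht : 1 ≤ t)
    {u v : EuclideanSpace 𝕜 ι} (hu : ‖u‖ = 1) (hv : ∀ j, v j = (t : 𝕜) ^ k j * u j) :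
    ‖v‖ ≤ t ^ n := by
  refine (pow_le_pow_iff_left₀ (norm_nonneg v) (by positivity) two_ne_zero).1 ?_
  calc ‖v‖ ^ 2 = ∑ j, (t ^ k j) ^ 2 * ‖u j‖ ^ 2 := by
        simp [EuclideanSpace.norm_sq_eq, hv, norm_mul, abs_of_nonneg (zero_le_one.trans ht),
          mul_pow]
    _ ≤ ∑ j, (t ^ n) ^ 2 * ‖u j‖ ^ 2 := by gcongr with j; exact hkn j
    _ = (t ^ n) ^ 2 := by rw [← Finset.mul_sum, ← EuclideanSpace.norm_sq_eq, hu, one_pow, mul_one]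

end EuclideanSpace

namespace MvPolynomial

variable {σ 𝕜 : Type*} [Fintype σ] [RCLike 𝕜] {k : σ → ℕ} {d : ℕ} {W : MvPolynomial σ 𝕜}

noncomputable def gradNormSq (W : MvPolynomial σ 𝕜) (z : σ → 𝕜) : ℝ :=
  ∑ i, ‖eval z (pderiv i W)‖ ^ 2

noncomputable def sumNormIteratedPderiv (n : ℕ) (W : MvPolynomial σ 𝕜) (z : σ → 𝕜) : ℝ :=
  ∑ I : Fin n → σ, ‖eval z (iteratedPderiv (List.ofFn I) W)‖

theorem continuous_gradNormSq (W : MvPolynomial σ 𝕜) : Continuous (gradNormSq W) :=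
  continuous_finsetSum _ fun _ _ => ((continuous_eval _).norm).pow 2

theorem continuous_sumNormIteratedPderiv (n : ℕ) (W : MvPolynomial σ 𝕜) :
    Continuous (sumNormIteratedPderiv n W) :=
  continuous_finsetSum _ fun _ _ => (continuous_eval _).norm

theorem gradNormSq_pos (hW : ∀ z, (∀ i, eval z (pderiv i W) = 0) → z = 0) {z : σ → 𝕜}
    (hz : z ≠ 0) : 0 < gradNormSq W z := by
  refine (Finset.sum_nonneg fun i _ => sq_nonneg _).lt_of_ne' fun h => hz (hW z fun i => ?_)
  simpa using (Finset.sum_eq_zero_iff_of_nonneg fun i _ => sq_nonneg _).1 h i (Finset.mem_univ i)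

theorem exists_pos_forall_le_gradNormSq_of_mem_sphere
    (hW : ∀ z, (∀ i, eval z (pderiv i W) = 0) → z = 0) :
    ∃ m : ℝ, 0 < m ∧ ∀ u ∈ Metric.sphere (0 : EuclideanSpace 𝕜 σ) 1, m ≤ gradNormSq W u :=
  (isCompact_sphere 0 1).exists_forall_le'
    ((continuous_gradNormSq W).comp (PiLp.continuous_ofLp 2 _)).continuousOn
    fun u hu => gradNormSq_pos hW (by simpa using ne_zero_of_mem_unit_sphere ⟨u, hu⟩)

theorem IsQuasiHomogeneous.pow_mul_gradNormSq_le (hW : IsQuasiHomogeneous k d W)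
    (hkd : ∀ i, 2 * k i ≤ d) {t : ℝ} (ht : 1 ≤ t) (z : σ → 𝕜) :
    t ^ d * gradNormSq W z ≤ gradNormSq W (fun j => (t : 𝕜) ^ k j * z j) := by
  rw [gradNormSq, gradNormSq, Finset.mul_sum]
  refine Finset.sum_le_sum fun i _ => ?_
  have hpow : t ^ d ≤ (t ^ ((d : ℤ) - k i)) ^ 2 := by
    rw [← zpow_natCast, ← zpow_natCast _ 2, ← zpow_mul]
    exact zpow_le_zpow_right₀ ht (by have := hkd i; omega)
  rw [(hW.pderiv i).norm_eval_scale (zero_lt_one.trans_le ht), mul_pow]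
  exact mul_le_mul_of_nonneg_right hpow (sq_nonneg _)

theorem IsQuasiHomogeneous.sumNormIteratedPderiv_le (hW : IsQuasiHomogeneous k d W)
    (hk : ∀ i, 0 < k i) {t : ℝ} (ht : 1 ≤ t) (n : ℕ) (z : σ → 𝕜) :
    sumNormIteratedPderiv n W (fun j => (t : 𝕜) ^ k j * z j)
      ≤ t ^ d / t ^ n * sumNormIteratedPderiv n W z := by
  rw [sumNormIteratedPderiv, sumNormIteratedPderiv, Finset.mul_sum]
  refine Finset.sum_le_sum fun I _ => ?_
  rw [(hW.iteratedPderiv _).norm_eval_scale (zero_lt_one.trans_le ht)]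
  gcongr
  rw [← zpow_natCast, ← zpow_natCast, ← zpow_sub₀ (by positivity)]
  refine zpow_le_zpow_right₀ ht (sub_le_sub_left ?_ _)
  rw [List.map_ofFn, List.sum_ofFn]
  simpa using Finset.card_nsmul_le_sum Finset.univ (fun j => (k (I j) : ℤ)) 1
    fun j _ => by exact_mod_cast hk (I j)

theorem IsQuasiHomogeneous.exists_bounds_of_one_le_norm (hW : IsQuasiHomogeneous k d W)
    (hk : ∀ i, 0 < k i) (hkd : ∀ i, 2 * k i ≤ d) {n : ℕ} {m M : ℝ}
    (hm : ∀ u ∈ Metric.sphere (0 : EuclideanSpace 𝕜 σ) 1, m ≤ gradNormSq W u)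
    (hM : ∀ u ∈ Metric.sphere (0 : EuclideanSpace 𝕜 σ) 1, sumNormIteratedPderiv n W u ≤ M)
    {z : EuclideanSpace 𝕜 σ} (hz : 1 ≤ ‖z‖) :
    ∃ t : ℝ, 1 ≤ t ∧ ‖z‖ ≤ t ^ d ∧ t ^ d * m ≤ gradNormSq W z ∧
      sumNormIteratedPderiv n W z ≤ t ^ d / t ^ n * M := by
  obtain ⟨t, ht, u, hu, hzu⟩ := EuclideanSpace.exists_weighted_polar hk hz
  have hu' : u ∈ Metric.sphere 0 1 := mem_sphere_zero_iff_norm.2 hu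
  have hz' : z.ofLp = fun j => (t : 𝕜) ^ k j * u j := _root_.funext hzu
  refine ⟨t, ht, EuclideanSpace.norm_le_pow_of_weighted (fun i => by have := hkd i; omega) ht hu
    hzu, ?_, ?_⟩
  · exact (mul_le_mul_of_nonneg_left (hm u hu') (by positivity)).trans
      (hz' ▸ hW.pow_mul_gradNormSq_le hkd ht _)
  · exact (hz' ▸ hW.sumNormIteratedPderiv_le hk ht n _).trans
      (mul_le_mul_of_nonneg_left (hM u hu') (by positivity))

end MvPolynomial

theorem tendsto_pow_mul_sub_div_pow_atTop {d n : ℕ} (hd : d ≠ 0) (hn : n ≠ 0) {a : ℝ}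
    (ha : 0 < a) (c : ℝ) : Tendsto (fun t : ℝ => t ^ d * a - t ^ d / t ^ n * c) atTop atTop := by
  have hlim : Tendsto (fun t : ℝ => a - c / t ^ n) atTop (nhds a) := by
    simpa using (tendsto_const_nhds (x := a)).sub
      ((tendsto_const_nhds (x := c)).div_atTop (tendsto_pow_atTop hn))
  refine ((tendsto_pow_atTop hd).atTop_mul_pos ha hlim).congr fun t => ?_
  ring

theorem strongly_regular_tame_quasihomogeneous_general
    (N : ℕ) (W : MvPolynomial (Fin N) ℂ)
    (q : Fin N → ℚ) (k : Fin N → ℕ) (d : ℕ)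
    (hk : ∀ i, 0 < k i) (hd : 0 < d)
    (hq : ∀ i, q i = (k i : ℚ) / (d : ℚ))
    (hhom : ∀ (lam : ℂ) (z : Fin N → ℂ),
      eval (fun i => lam ^ (k i) * z i) W = lam ^ d * eval z W)
    (hnd : ∀ z : Fin N → ℂ, (∀ i, eval z (pderiv i W) = 0) → z = 0)
    (hhalf : ∀ i, q i ≤ 1 / 2) :
    ∀ s : ℕ, 1 ≤ s → ∀ C : ℝ, 0 < C → ∀ K : ℝ, ∃ R : ℝ, 0 < R ∧
      ∀ z : EuclideanSpace ℂ (Fin N), R ≤ ‖z‖ →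
        K ≤ (∑ i, ‖eval (z : Fin N → ℂ) (pderiv i W)‖ ^ 2) ^ s
            - C * ∑ I : Fin (2 * s) → Fin N,
                ‖eval (z : Fin N → ℂ)
                  ((List.ofFn I).foldl (fun p i => pderiv i p) W)‖ := by
  intro s hs C hC K
  have hkd : ∀ i, 2 * k i ≤ d := fun i => by
    have h := hhalf i
    rw [hq i, div_le_iff₀ (by positivity)] at h
    exact_mod_cast (by push_cast; linarith : ((2 * k i : ℕ) : ℚ) ≤ d)
  have hW : IsQuasiHomogeneous k d W := fun t _ z => by rw [hhom, zpow_natCast]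
  obtain ⟨m, hm, hmG⟩ := exists_pos_forall_le_gradNormSq_of_mem_sphere hnd
  obtain ⟨M, hM⟩ := (isCompact_sphere (0 : EuclideanSpace ℂ (Fin N)) 1).bddAbove_image
    ((continuous_sumNormIteratedPderiv (2 * s) W).comp (PiLp.continuous_ofLp 2 _)).continuousOn
  obtain ⟨T, hT⟩ := eventually_atTop.1 <| (tendsto_pow_mul_sub_div_pow_atTop hd.ne'
    (by omega : 2 * s ≠ 0) (pow_pos hm s) (C * M)).eventually_ge_atTop K
  refine ⟨max T 1 ^ d, by positivity, fun z hz => ?_⟩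
  obtain ⟨t, ht, hzt, hG, hD⟩ := hW.exists_bounds_of_one_le_norm hk hkd hmG
    (fun u hu => hM ⟨u, hu, rfl⟩) ((one_le_pow₀ (le_max_right T 1)).trans hz)
  have hTt : T ≤ t := (le_max_left T 1).trans <|
    (pow_le_pow_iff_left₀ (by positivity) (by positivity) hd.ne').1 (hz.trans hzt)
  have hGs : t ^ d * m ^ s ≤ gradNormSq W z ^ s := calc
    t ^ d * m ^ s ≤ (t ^ d * m) ^ s := by
      rw [mul_pow]; gcongr; exact le_self_pow₀ (one_le_pow₀ ht) (by omega)
    _ ≤ gradNormSq W z ^ s := by gcongr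
  have hCD := mul_le_mul_of_nonneg_left hD hC.le
  calc K ≤ t ^ d * m ^ s - t ^ d / t ^ (2 * s) * (C * M) := hT t hTt
    _ ≤ gradNormSq W z ^ s - C * sumNormIteratedPderiv (2 * s) W z := by linarith

/-- **Strong regular tameness of `(ℂ^N, W)`.**
If `W` is a nondegenerate quasi-homogeneous polynomial of type `(q₁,…,q_N)` with all
weights `qᵢ ≤ 1/2`, then for every `s ≥ 1` and every `C > 0` one has
`|∇W|^{2s} − C·Σ_{|I|=2s}|∂^I W| → ∞` as `‖z‖ → ∞`, the sum running over all ordered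
multi-indices `I = (i₁,…,i_{2s})` of order `2s`. -/
theorem strongly_regular_tame_quasihomogeneous
    (N : ℕ) (hN : 1 ≤ N) (W : MvPolynomial (Fin N) ℂ)
    (q : Fin N → ℚ) (k : Fin N → ℕ) (d : ℕ)
    (hk : ∀ i, 0 < k i) (hd : 0 < d)
    (hq : ∀ i, q i = (k i : ℚ) / (d : ℚ))
    (hq0 : ∀ i, 0 < q i) (hq1 : ∀ i, q i < 1)
    (hhom : ∀ (lam : ℂ) (z : Fin N → ℂ),
      eval (fun i => lam ^ (k i) * z i) W = lam ^ d * eval z W)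
    (hnd : ∀ z : Fin N → ℂ, (∀ i, eval z (pderiv i W) = 0) → z = 0)
    (hhalf : ∀ i, q i ≤ 1 / 2) :
    ∀ s : ℕ, 1 ≤ s → ∀ C : ℝ, 0 < C → ∀ K : ℝ, ∃ R : ℝ, 0 < R ∧
      ∀ z : EuclideanSpace ℂ (Fin N), R ≤ ‖z‖ →
        K ≤ (∑ i, ‖eval (z : Fin N → ℂ) (pderiv i W)‖ ^ 2) ^ s
            - C * ∑ I : Fin (2 * s) → Fin N,
                ‖eval (z : Fin N → ℂ)
                  ((List.ofFn I).foldl (fun p i => pderiv i p) W)‖ :=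
  strongly_regular_tame_quasihomogeneous_general N W q k d hk hd hq hhom hnd hhalf
end
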